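/- For every u ∈ T^n and every 1 ≤ i ≤ n−1: if σ̄_i(u) = u, then σ_i(u) = u. -/

import Mathlib

/- Setting (common to all statements):
`V` is the complex vector space with basis `X_1, …, X_N`, `T = T(V)` the tensor algebra,
realized concretely as the algebra of the free monoid of words in the letters `Fin N`;
the homogeneous component `T^n` is the span of the words of length `n`.
For `j < i` we are given nonzero scalars `b i j` and elements `p i j` in the span of the
`X_k ⊗ X_l` with `k, l ≤ i - 1`; `I_R` is the two-sided ideal generated by the elements
`X_i ⊗ X_j − b_{ij} X_j ⊗ X_i − p_{ij}`, and `𝒜 = T/I_R`. -/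

open scoped BigOperators

noncomputable section

namespace QDiff

/-- Words in the letters `X_1, …, X_N` (indexed by `Fin N`). -/
abbrev Word (N : ℕ) := FreeMonoid (Fin N)

/-- The tensor algebra `T(V)` over the `N`-dimensional space `V` with basis `X_1,…,X_N`,
realized concretely as the monoid algebra on words. -/
abbrev T (N : ℕ) := MonoidAlgebra ℂ (Word N)

variable {N : ℕ}

/-- The basis vector `X_i` of `V ⊆ T(V)`. -/
def X (i : Fin N) : T N := MonoidAlgebra.single (FreeMonoid.of i) 1

/-- The monomial of `T(V)` associated to a word. -/
def mono (w : Word N) : T N := MonoidAlgebra.single w 1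

/-- Length (tensor degree) of a word. -/
def wlen (w : Word N) : ℕ := (FreeMonoid.toList w).length

/-- `cnt w k`: the number of occurrences of the letter `X_k` in the word `w`;
so `fun k => cnt w k` is `ℓ(w)`. -/
def cnt (w : Word N) (k : Fin N) : ℕ := (FreeMonoid.toList w).count k

/-- `w' <_l w`: at the smallest index at which `ℓ(w')` and `ℓ(w)` differ,
the entry of `ℓ(w')` is strictly greater than that of `ℓ(w)`. -/
def lexLt (w' w : Word N) : Prop :=
  ∃ k : Fin N, (∀ j : Fin N, j < k → cnt w' j = cnt w j) ∧ cnt w k < cnt w' k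

/-- `w' ≤_l w`. -/
def lexLe (w' w : Word N) : Prop := (∀ k : Fin N, cnt w' k = cnt w k) ∨ lexLt w' w

/-- The homogeneous component `T^n` of the tensor algebra. -/
def Tdeg (N n : ℕ) : Submodule ℂ (T N) :=
  Submodule.span ℂ {x : T N | ∃ w : Word N, wlen w = n ∧ x = mono w}

variable (b : Fin N → Fin N → ℂ) (p : Fin N → Fin N → T N)

/-- The scalars `b i j` (for `j < i`) are nonzero. -/
def GoodB : Prop := ∀ i j : Fin N, j < i → b i j ≠ 0

/-- Each `p i j` (for `j < i`) lies in the span of the monomials `X_k ⊗ X_l`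
with `k, l ≤ i - 1`. -/
def GoodP : Prop := ∀ i j : Fin N, j < i →
  p i j ∈ Submodule.span ℂ {x : T N | ∃ k l : Fin N, k < i ∧ l < i ∧ x = X k * X l}

/-- The generator `X_i ⊗ X_j − b_{ij} X_j ⊗ X_i − p_{ij}` of the ideal of relations. -/
def relGen (i j : Fin N) : T N := X i * X j - b i j • (X j * X i) - p i j

/-- The two-sided ideal `I_R` of relations (as a `ℂ`-submodule it is the span of the
elements `a ⬝ relGen i j ⬝ c`). -/
def IR : Submodule ℂ (T N) :=
  Submodule.span ℂ
    {x : T N | ∃ (i j : Fin N) (a c : T N), j < i ∧ x = a * relGen b p i j * c}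

/-- Condition (EA): every `u ∈ I_R` lies in the span of the elements
`a ⊗ (X_i ⊗ X_j − b_{ij} X_j ⊗ X_i − p_{ij}) ⊗ c`, where `j < i` and `a, c` are monomials
of `T` such that the monomial `a ⊗ X_i ⊗ X_j ⊗ c` is `≤_l` every monomial occurring in `u`. -/
def EA : Prop :=
  ∀ u ∈ IR b p, u ∈ Submodule.span ℂ
    {x : T N | ∃ (i j : Fin N) (a c : Word N), j < i ∧
      x = mono a * relGen b p i j * mono c ∧
      ∀ w ∈ (u.coeff : Word N →₀ ℂ).support,
        lexLe (a * (FreeMonoid.of i * FreeMonoid.of j) * c) w}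

/-- The map `S : V ⊗ V → V ⊗ V` on pairs of basis vectors. -/
def Sact (x y : Fin N) : T N :=
  if y < x then b x y • (X y * X x) + p x y
  else if x < y then (b y x)⁻¹ • (X y * X x - p y x)
  else X x * X y

/-- The map `S̄ : V ⊗ V → V ⊗ V` on pairs of basis vectors. -/
def SbarAct (x y : Fin N) : T N :=
  if y < x then b x y • (X y * X x)
  else if x < y then (b y x)⁻¹ • (X y * X x)
  else X x * X y

/-- Extend a function on words to a linear endomorphism of `T(V)`. -/
def liftWord (f : Word N → T N) : T N →ₗ[ℂ] T N :=
  Finsupp.lsum ℂ (fun w => LinearMap.toSpanSingleton ℂ (T N) (f w)) ∘ₗ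
    (MonoidAlgebra.coeffLinearEquiv ℂ).toLinearMap

/-- The action of the paper's `σ_{k+1}` (acting on the tensor factors in 0-indexed
positions `k, k+1`) on a word; identity on words that are too short. -/
def sigmaWord (k : ℕ) (w : Word N) : T N :=
  if h : k + 2 ≤ (FreeMonoid.toList w).length then
    mono (FreeMonoid.ofList ((FreeMonoid.toList w).take k)) *
      Sact b p ((FreeMonoid.toList w).get ⟨k, by omega⟩)
        ((FreeMonoid.toList w).get ⟨k + 1, by omega⟩) *
      mono (FreeMonoid.ofList ((FreeMonoid.toList w).drop (k + 2)))
  else mono w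

/-- The paper's operator `σ_{k+1}`: it acts as `S` on the tensor factors in 0-indexed
positions `k, k+1` and as the identity on all other factors. -/
def sigma (k : ℕ) : T N →ₗ[ℂ] T N := liftWord (sigmaWord b p k)

/-- The action of the paper's `σ̄_{k+1}` on a word. -/
def sigmabarWord (k : ℕ) (w : Word N) : T N :=
  if h : k + 2 ≤ (FreeMonoid.toList w).length then
    mono (FreeMonoid.ofList ((FreeMonoid.toList w).take k)) *
      SbarAct b ((FreeMonoid.toList w).get ⟨k, by omega⟩)
        ((FreeMonoid.toList w).get ⟨k + 1, by omega⟩) *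
      mono (FreeMonoid.ofList ((FreeMonoid.toList w).drop (k + 2)))
  else mono w

/-- The paper's operator `σ̄_{k+1}`: it acts as `S̄` on the tensor factors in 0-indexed
positions `k, k+1` and as the identity on all other factors. -/
def sigmabar (k : ℕ) : T N →ₗ[ℂ] T N := liftWord (sigmabarWord b k)

/-- The scalar by which `S̄` twists the (ordered) pair `(x, y)`. -/
def betaC (x y : Fin N) : ℂ := if y < x then b x y else if x < y then (b y x)⁻¹ else 1

/-- The coefficient of the quasi-permutation action of `σ ∈ S_n` on the word
`X_{f 0} ⊗ ⋯ ⊗ X_{f (n-1)}`: the product of `β` over the inversions of `σ`. -/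
def permCoeff {n : ℕ} (σ : Equiv.Perm (Fin n)) (f : Fin n → Fin N) : ℂ :=
  ∏ q ∈ Finset.univ.filter (fun q : Fin n × Fin n => q.1 < q.2 ∧ σ q.2 < σ q.1),
    betaC b (f q.1) (f q.2)

/-- The quasi-permutation action of `σ ∈ S_n` on a word
(identity on words of length `≠ n`). -/
def permWordFun {n : ℕ} (σ : Equiv.Perm (Fin n)) (w : Word N) : T N :=
  if h : (FreeMonoid.toList w).length = n then
    permCoeff b σ (fun j => (FreeMonoid.toList w).get (Fin.cast h.symm j)) •
      mono (FreeMonoid.ofList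
        (List.ofFn fun j => (FreeMonoid.toList w).get (Fin.cast h.symm (σ⁻¹ j))))
  else mono w

/-- The operator `σ̄` on `T^n` for an arbitrary permutation `σ ∈ S_n`
(the quasi-permutation representation). -/
def sigmabarPerm {n : ℕ} (σ : Equiv.Perm (Fin n)) : T N →ₗ[ℂ] T N :=
  liftWord (permWordFun b σ)

/-- The quasi-symmetrization operator `P_quasisym = (1/n!) ∑_{σ ∈ S_n} σ̄` on `T^n`. -/
def Pquasisym (n : ℕ) : T N →ₗ[ℂ] T N :=
  (n.factorial : ℂ)⁻¹ • ∑ σ : Equiv.Perm (Fin n), sigmabarPerm b σ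

/-- The adjacent transposition `s_{k+1} = (k, k+1)` (0-indexed) in `S_n`. -/
def swapAdj (n : ℕ) (k : {k : ℕ // k + 2 ≤ n}) : Equiv.Perm (Fin n) :=
  Equiv.swap ⟨k.1, by omega⟩ ⟨k.1 + 1, by omega⟩

/-- A choice, for each `σ ∈ S_n`, of a list of adjacent transpositions. -/
def DecompChoice (n : ℕ) := Equiv.Perm (Fin n) → List {k : ℕ // k + 2 ≤ n}

/-- The chosen lists really are decompositions: `σ = s_{i_1} ⋯ s_{i_r}`. -/
def ValidDecomp {n : ℕ} (D : DecompChoice n) : Prop :=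
  ∀ σ : Equiv.Perm (Fin n), ((D σ).map (swapAdj n)).prod = σ

/-- `σ̂ = σ_{i_1} ⋯ σ_{i_r}` for the chosen decomposition `σ = s_{i_1} ⋯ s_{i_r}`. -/
def Phat {n : ℕ} (D : DecompChoice n) (σ : Equiv.Perm (Fin n)) : Module.End ℂ (T N) :=
  ((D σ).map (fun k => (sigma b p k.1 : Module.End ℂ (T N)))).prod

/-- `P = (1/n!) ∑_{σ ∈ S_n} σ̂` (depending on the chosen decompositions `D`). -/
def POp {n : ℕ} (D : DecompChoice n) : Module.End ℂ (T N) :=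
  (n.factorial : ℂ)⁻¹ • ∑ σ : Equiv.Perm (Fin n), Phat b p D σ

/-- `Q` is the operator `𝒫_qsym = lim_{M → ∞} P^M`: on each `T^n` and for every choice
of decompositions, the sequence `P^M u` is eventually equal to `Q u`. -/
def IsPqsym (Q : T N →ₗ[ℂ] T N) : Prop :=
  ∀ (n : ℕ) (D : DecompChoice n), ValidDecomp D →
    ∀ u ∈ Tdeg N n, ∃ N₀ : ℕ, ∀ M ≥ N₀, ((POp b p D) ^ M) u = Q u

/-- The operator `I_r ⊗ Q^k ⊗ I_s` on `T^{r+k+s}`: on a word, apply `Q` to the middle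
`k` tensor factors and the identity to the outer factors. -/
def middleMap (Q : T N →ₗ[ℂ] T N) (r k : ℕ) : T N →ₗ[ℂ] T N :=
  liftWord (fun w =>
    mono (FreeMonoid.ofList ((FreeMonoid.toList w).take r)) *
      Q (mono (FreeMonoid.ofList (((FreeMonoid.toList w).drop r).take k))) *
      mono (FreeMonoid.ofList ((FreeMonoid.toList w).drop (r + k))))

/-- The pairing between `T(V^*)` (realized via the dual basis, hence again as the span
of words) and `T(V)`: a dual-basis word pairs to `1` with the corresponding word of the
same degree, and to `0` with all other words. -/
def pairT (w z : T N) : ℂ :=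
  Finsupp.sum (w.coeff : Word N →₀ ℂ) (fun a c => c * (z.coeff : Word N →₀ ℂ) a)

/-- The quotient relation defining the quadratic algebra `𝒜 = T/I_R = RingQuot (Rel b p)`. -/
inductive Rel (b : Fin N → Fin N → ℂ) (p : Fin N → Fin N → T N) : T N → T N → Prop
  | mk (i j : Fin N) (h : j < i) : Rel b p (X i * X j) (b i j • (X j * X i) + p i j)

/-- The ordered monomial `X_1^{a_1} ⊗ X_2^{a_2} ⊗ ⋯ ⊗ X_N^{a_N}`. -/
def ordMono (a : Fin N → ℕ) : T N := ((List.finRange N).map (fun i => X i ^ a i)).prod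

/-! Write `D = σ_i − σ̄_i`; on a word it only sees the two letters in positions `i, i+1`,
where it is the `p`-part of `S`. On each pair of letters `D ∘ σ̄_i = −D`: `σ̄_i` swaps the
letters with the factor `β` of `betaC`, and `β` cancels the `b⁻¹` that `S` attaches to `p` on
the swapped pair (this is where `b_{ij} ≠ 0` enters). So `σ̄_i u = u` forces `D u = −D u`,
i.e. `D u = 0` and `σ_i u = σ̄_i u = u`. -/

instance : IsAddTorsionFree (T N) := .of_module_rat _

lemma liftWord_mono (f : Word N → T N) (w : Word N) : liftWord f (mono w) = f w := by
  simp [liftWord, mono]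

lemma linearMap_ext_mono {F G : T N →ₗ[ℂ] T N} (h : ∀ w, F (mono w) = G (mono w)) : F = G :=
  MonoidAlgebra.lhom_ext' fun w => LinearMap.ext fun c => by
    have hc : MonoidAlgebra.single w c = c • mono w := by simp [mono]
    simp only [LinearMap.comp_apply, MonoidAlgebra.lsingle_apply, hc, map_smul, h]

lemma mono_ofList_append_cons_cons (t : List (Fin N)) (x y : Fin N) (d : List (Fin N)) :
    mono (FreeMonoid.ofList (t ++ x :: y :: d)) =
      mono (FreeMonoid.ofList t) * (X x * X y) * mono (FreeMonoid.ofList d) := by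
  simp only [mono, X, MonoidAlgebra.single_mul_single, mul_one]
  congr 1
  exact FreeMonoid.toList.injective (by simp)

lemma exists_eq_ofList_append_cons_cons {w : Word N} {k : ℕ} (h : k + 2 ≤ wlen w) :
    ∃ (t : List (Fin N)) (x y : Fin N) (d : List (Fin N)),
      t.length = k ∧ w = FreeMonoid.ofList (t ++ x :: y :: d) := by
  have hdrop : 2 ≤ (w.toList.drop k).length := by simp [wlen] at h ⊢; omega
  rcases hd : w.toList.drop k with _ | ⟨x, _ | ⟨y, d⟩⟩
  all_goals rw [hd] at hdrop
  · simp at hdrop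
  · simp at hdrop
  · refine ⟨w.toList.take k, x, y, d, by simp [wlen] at h ⊢; omega, ?_⟩
    rw [← hd, List.take_append_drop, FreeMonoid.ofList_toList]

lemma sigmaWord_ofList_append_cons_cons (t : List (Fin N)) (x y : Fin N) (d : List (Fin N)) :
    sigmaWord b p t.length (FreeMonoid.ofList (t ++ x :: y :: d)) =
      mono (FreeMonoid.ofList t) * Sact b p x y * mono (FreeMonoid.ofList d) := by
  simp [sigmaWord]

lemma sigmabarWord_ofList_append_cons_cons (t : List (Fin N)) (x y : Fin N) (d : List (Fin N)) :
    sigmabarWord b t.length (FreeMonoid.ofList (t ++ x :: y :: d)) =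
      mono (FreeMonoid.ofList t) * SbarAct b x y * mono (FreeMonoid.ofList d) := by
  simp [sigmabarWord]

lemma sigma_mono_of_wlen_lt {k : ℕ} {w : Word N} (h : wlen w < k + 2) :
    sigma b p k (mono w) = mono w := by
  rw [sigma, liftWord_mono, sigmaWord, dif_neg (by simpa [wlen] using h)]

lemma sigmabar_mono_of_wlen_lt {k : ℕ} {w : Word N} (h : wlen w < k + 2) :
    sigmabar b k (mono w) = mono w := by
  rw [sigmabar, liftWord_mono, sigmabarWord, dif_neg (by simpa [wlen] using h)]

lemma SbarAct_eq_betaC_smul (x y : Fin N) : SbarAct b x y = betaC b x y • (X y * X x) := by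
  rcases lt_trichotomy x y with hxy | rfl | hxy <;>
    simp [SbarAct, betaC, *, not_lt_of_gt]

lemma betaC_smul_Sact_sub_SbarAct_swap (hb : GoodB b) (x y : Fin N) :
    betaC b x y • (Sact b p y x - SbarAct b y x) = -(Sact b p x y - SbarAct b x y) := by
  rcases lt_trichotomy x y with hxy | rfl | hxy
  · simp [Sact, SbarAct, betaC, hxy, not_lt_of_gt hxy, ← smul_sub]
  · simp [Sact, SbarAct, betaC]
  · simp [Sact, SbarAct, betaC, hxy, not_lt_of_gt hxy, ← smul_sub, smul_smul, hb x y hxy]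

lemma sigmabar_mono_ofList_append_cons_cons (t : List (Fin N)) (x y : Fin N) (d : List (Fin N)) :
    sigmabar b t.length (mono (FreeMonoid.ofList (t ++ x :: y :: d))) =
      betaC b x y • mono (FreeMonoid.ofList (t ++ y :: x :: d)) := by
  rw [sigmabar, liftWord_mono, sigmabarWord_ofList_append_cons_cons, SbarAct_eq_betaC_smul,
    mono_ofList_append_cons_cons, mul_smul_comm, smul_mul_assoc]

lemma sigma_sub_sigmabar_mono_ofList_append_cons_cons (t : List (Fin N)) (x y : Fin N)
    (d : List (Fin N)) :
    (sigma b p t.length - sigmabar b t.length) (mono (FreeMonoid.ofList (t ++ x :: y :: d))) =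
      mono (FreeMonoid.ofList t) * (Sact b p x y - SbarAct b x y) * mono (FreeMonoid.ofList d) := by
  rw [LinearMap.sub_apply, sigma, sigmabar, liftWord_mono, liftWord_mono,
    sigmaWord_ofList_append_cons_cons, sigmabarWord_ofList_append_cons_cons, mul_sub, sub_mul]

lemma sigma_sub_sigmabar_comp_sigmabar (hb : GoodB b) (k : ℕ) :
    (sigma b p k - sigmabar b k) ∘ₗ sigmabar b k = -(sigma b p k - sigmabar b k) := by
  refine linearMap_ext_mono fun w => ?_
  by_cases h : k + 2 ≤ wlen w
  · obtain ⟨t, x, y, d, rfl, rfl⟩ := exists_eq_ofList_append_cons_cons h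
    rw [LinearMap.comp_apply, sigmabar_mono_ofList_append_cons_cons, map_smul,
      sigma_sub_sigmabar_mono_ofList_append_cons_cons, LinearMap.neg_apply,
      sigma_sub_sigmabar_mono_ofList_append_cons_cons, ← smul_mul_assoc, ← mul_smul_comm,
      betaC_smul_Sact_sub_SbarAct_swap b p hb, mul_neg, neg_mul]
  · have hshort := not_le.mp h
    simp [sigma_mono_of_wlen_lt b p hshort, sigmabar_mono_of_wlen_lt b hshort]

theorem statement7_general {N : ℕ} (b : Fin N → Fin N → ℂ) (p : Fin N → Fin N → T N)
    (hb : GoodB b) :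
    ∀ (n k : ℕ), k + 2 ≤ n → ∀ u ∈ Tdeg N n,
      sigmabar b k u = u → sigma b p k u = u := by
  intro n k _ u _ hfix
  have hanti : (sigma b p k - sigmabar b k) u = -(sigma b p k - sigmabar b k) u := by
    conv_lhs => rw [← hfix]
    exact LinearMap.congr_fun (sigma_sub_sigmabar_comp_sigmabar b p hb k) u
  have hzero : (sigma b p k - sigmabar b k) u = 0 := self_eq_neg.mp hanti
  rwa [LinearMap.sub_apply, sub_eq_zero, hfix] at hzero

/-- for `u ∈ T^n` and `1 ≤ i ≤ n−1` (here `i = k+1`):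
if `σ̄_i(u) = u` then `σ_i(u) = u`. -/
theorem statement7 {N : ℕ} (b : Fin N → Fin N → ℂ) (p : Fin N → Fin N → T N)
    (hb : GoodB b) (hp : GoodP p) :
    ∀ (n k : ℕ), k + 2 ≤ n → ∀ u ∈ Tdeg N n,
      sigmabar b k u = u → sigma b p k u = u :=
  statement7_general b p hb

end QDiff
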